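/- arXiv:2201.11958 — 4 statements merged into one kernel-verified Lean document; each statement's English description precedes it below -/
import Mathlib

section
/- For all integers m, n ≥ 2, the Wiener index of the orientation D_{m,n} of the grid G_{m,n} satisfies W(D_{m,n}) = (1/12)·(10m³n² + 10m²n³ − 6m³n − 24m²n² − 6mn³ + 4m³ + 14m²n + 14mn² + 4n³ − 12mn − 4m − 4n). -/
/-- Directed distance in a digraph with arc relation `A`: the length of a
shortest directed walk from `u` to `v`, with value `0` if no such walk exists. -/
noncomputable def ddist {V : Type*} (A : V → V → Prop) (u v : V) : ℕ :=
  sInf {k : ℕ | ∃ f : ℕ → V, f 0 = u ∧ f k = v ∧ ∀ i < k, A (f i) (f (i + 1))}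

/-- Wiener index of a digraph: the sum of `ddist` over all ordered pairs of vertices. -/
noncomputable def wiener {V : Type*} [Fintype V] (A : V → V → Prop) : ℕ :=
  ∑ u : V, ∑ v : V, ddist A u v

/-- The orientation `D_{m,n}` of the grid `G_{m,n}` (`0`-indexed: vertex `(a, b)`
is the paper's vertex `(a+1, b+1)`, i.e. row `a+1` and column `b+1`). -/
def DArc (m n : ℕ) (p q : Fin m × Fin n) : Prop :=
  -- columns 1 … n−1 directed upward
  (p.2 = q.2 ∧ (p.2 : ℕ) + 2 ≤ n ∧ (p.1 : ℕ) = (q.1 : ℕ) + 1) ∨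
  -- column n directed downward
  (p.2 = q.2 ∧ (p.2 : ℕ) + 1 = n ∧ (q.1 : ℕ) = (p.1 : ℕ) + 1) ∨
  -- row 1 directed rightward
  (p.1 = q.1 ∧ (p.1 : ℕ) = 0 ∧ (q.2 : ℕ) = (p.2 : ℕ) + 1) ∨
  -- rows 2 … m directed leftward
  (p.1 = q.1 ∧ 1 ≤ (p.1 : ℕ) ∧ (p.2 : ℕ) = (q.2 : ℕ) + 1)

set_option maxHeartbeats 2000000

open Finset

def Dn (n a b c d : ℕ) : ℕ :=
  if b + 1 = n then
    if d + 1 = n then (if a ≤ c then c - a else a + c + 2)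
    else if a = 0 then (if c = 0 then n + 1 - d else c + (n - 1 - d))
    else if a ≤ c then (c - a) + (n - 1 - d) else (n - 1 - d) + (a - c)
  else
    if d ≤ b then
      if c ≤ a then (if a = 0 ∧ d < b then 2 * n - b - d else (a - c) + (b - d))
      else a + c + 2 * (n - 1) - b - d
    else if c = 0 then a + (d - b)
    else if d + 1 = n then a + (n - 1 - b) + c
    else a + c + 2 * (n - 1) - b - d

def Dz (n a b c d : ℕ) : ℤ :=
  if b + 1 = n then
    if d + 1 = n then (if a ≤ c then (c : ℤ) - a else (a : ℤ) + c + 2)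
    else if a = 0 then (if c = 0 then (n : ℤ) + 1 - d else (c : ℤ) + (n - 1 - d))
    else if a ≤ c then ((c : ℤ) - a) + ((n : ℤ) - 1 - d) else ((n : ℤ) - 1 - d) + ((a : ℤ) - c)
  else
    if d ≤ b then
      if c ≤ a then (if a = 0 ∧ d < b then 2 * (n : ℤ) - b - d else ((a : ℤ) - c) + ((b : ℤ) - d))
      else (a : ℤ) + c + 2 * ((n : ℤ) - 1) - b - d
    else if c = 0 then (a : ℤ) + ((d : ℤ) - b)
    else if d + 1 = n then (a : ℤ) + ((n : ℤ) - 1 - b) + c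
    else (a : ℤ) + c + 2 * ((n : ℤ) - 1) - b - d

lemma Dn_cast {n a b c d : ℕ} (hb : b < n) (hd : d < n) :
    (Dn n a b c d : ℤ) = Dz n a b c d := by
  simp only [Dn, Dz]; split_ifs <;> push_cast <;> omega

lemma Dn_self {n b : ℕ} (hb : b < n) (a : ℕ) : Dn n a b a b = 0 := by
  simp only [Dn]; split_ifs <;> omega

lemma Dn_eq_zero {n a b c d : ℕ} (hb : b < n) (hd : d < n) (hn : 2 ≤ n)
    (h : Dn n a b c d = 0) : a = c ∧ b = d := by
  simp only [Dn] at h; split_ifs at h <;> omega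

def ArcN (m n a b a' b' : ℕ) : Prop :=
  (b = b' ∧ b + 2 ≤ n ∧ a = a' + 1) ∨ (b = b' ∧ b + 1 = n ∧ a' = a + 1) ∨
  (a = a' ∧ a = 0 ∧ b' = b + 1) ∨ (a = a' ∧ 1 ≤ a ∧ b = b' + 1)

lemma Dn_step (m n a b c d : ℕ) (hm : 2 ≤ m) (hn : 2 ≤ n) (ha : a < m) (hb : b < n)
    (hc : c < m) (hd : d < n) (hne : ¬(a = c ∧ b = d)) :
    ∃ a' b', a' < m ∧ b' < n ∧ ArcN m n a b a' b' ∧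
      Dn n a' b' c d + 1 = Dn n a b c d := by
  by_cases h1 : b + 1 = n
  · by_cases h2 : a < c ∨ a = 0
    · exact ⟨a + 1, b, by omega, hb, Or.inr (Or.inl ⟨rfl, h1, rfl⟩),
        by simp only [Dn]; split_ifs <;> first | (exfalso; exact ‹False›) | omega⟩
    · exact ⟨a, b - 1, ha, by omega, Or.inr (Or.inr (Or.inr ⟨rfl, by omega, by omega⟩)),
        by simp only [Dn]; split_ifs <;> first | (exfalso; exact ‹False›) | omega⟩
  · by_cases h2 : a = 0
    · exact ⟨a, b + 1, ha, by omega, Or.inr (Or.inr (Or.inl ⟨rfl, h2, rfl⟩)),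
        by simp only [Dn]; split_ifs <;> first | (exfalso; exact ‹False›) | omega⟩
    · by_cases h3 : d ≤ b ∧ c ≤ a ∧ d < b
      · exact ⟨a, b - 1, ha, by omega, Or.inr (Or.inr (Or.inr ⟨rfl, by omega, by omega⟩)),
          by simp only [Dn]; split_ifs <;> first | (exfalso; exact ‹False›) | omega⟩
      · exact ⟨a - 1, b, by omega, hb, Or.inl ⟨rfl, by omega, by omega⟩,
          by simp only [Dn]; split_ifs <;> first | (exfalso; exact ‹False›) | omega⟩

lemma Dn_triangle (m n a b a' b' c d : ℕ) (hm : 2 ≤ m) (hn : 2 ≤ n) (ha : a < m)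
    (hb : b < n) (ha' : a' < m) (hb' : b' < n) (hc : c < m) (hd : d < n)
    (harc : ArcN m n a b a' b') : Dn n a b c d ≤ Dn n a' b' c d + 1 := by
  rcases harc with h | h | h | h <;>
    (simp only [Dn]; split_ifs <;> first | (exfalso; exact ‹False›) | omega)

lemma DArc_iff {m n : ℕ} (p q : Fin m × Fin n) :
    DArc m n p q ↔ ArcN m n p.1 p.2 q.1 q.2 := by
  simp only [DArc, ArcN, Fin.ext_iff]

lemma exists_walk (m n : ℕ) (hm : 2 ≤ m) (hn : 2 ≤ n) :
    ∀ (k : ℕ) (u v : Fin m × Fin n), Dn n u.1 u.2 v.1 v.2 = k →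
      ∃ f : ℕ → Fin m × Fin n, f 0 = u ∧ f k = v ∧ ∀ i < k, DArc m n (f i) (f (i + 1)) := by
  intro k
  induction k with
  | zero =>
    intro u v h
    obtain ⟨h1, h2⟩ := Dn_eq_zero u.2.isLt v.2.isLt hn h
    have huv : u = v := Prod.ext (Fin.ext h1) (Fin.ext h2)
    exact ⟨fun _ => u, rfl, huv.symm ▸ rfl, by omega⟩
  | succ k ih =>
    intro u v h
    have hne : ¬((u.1 : ℕ) = v.1 ∧ (u.2 : ℕ) = v.2) := by
      rintro ⟨h1, h2⟩
      rw [← h1, ← h2, Dn_self u.2.isLt] at h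
      omega
    obtain ⟨a', b', ha', hb', harc, hD⟩ :=
      Dn_step m n u.1 u.2 v.1 v.2 hm hn u.1.isLt u.2.isLt v.1.isLt v.2.isLt hne
    have hDw : Dn n a' b' v.1 v.2 = k := by omega
    obtain ⟨g, hg0, hgk, hgw⟩ := ih (⟨a', ha'⟩, ⟨b', hb'⟩) v hDw
    refine ⟨fun i => if i = 0 then u else g (i - 1), by simp, by simp [hgk], ?_⟩
    intro i hi
    rcases Nat.eq_zero_or_pos i with h0 | h0
    · subst h0
      simpa [hg0] using (DArc_iff u (⟨a', ha'⟩, ⟨b', hb'⟩)).2 harc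
    · have e1 : ¬(i = 0) := by omega
      have e2 : ¬(i + 1 = 0) := by omega
      simp only [e1, e2, if_false]
      have : i - 1 + 1 = i := by omega
      rw [show i + 1 - 1 = i from rfl, ← this]
      exact hgw (i - 1) (by omega)
  termination_by k => k

lemma walk_le (m n : ℕ) (hm : 2 ≤ m) (hn : 2 ≤ n) (v : Fin m × Fin n) :
    ∀ (k : ℕ) (f : ℕ → Fin m × Fin n), (∀ i < k, DArc m n (f i) (f (i + 1))) →
      Dn n (f 0).1 (f 0).2 v.1 v.2 ≤ k + Dn n (f k).1 (f k).2 v.1 v.2 := by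
  intro k
  induction k with
  | zero => intro f _; simp
  | succ k ih =>
    intro f hf
    have h1 := ih (fun i => f (i + 1)) (fun i hi => hf (i + 1) (by omega))
    have h2 := Dn_triangle m n (f 0).1 (f 0).2 (f 1).1 (f 1).2 v.1 v.2 hm hn
      (f 0).1.isLt (f 0).2.isLt (f 1).1.isLt (f 1).2.isLt v.1.isLt v.2.isLt
      ((DArc_iff (f 0) (f 1)).1 (hf 0 (by omega)))
    simp only [Nat.zero_add] at h1
    omega

lemma ddist_eq (m n : ℕ) (hm : 2 ≤ m) (hn : 2 ≤ n) (u v : Fin m × Fin n) :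
    ddist (DArc m n) u v = Dn n u.1 u.2 v.1 v.2 := by
  have hmem : Dn n u.1 u.2 v.1 v.2 ∈
      {k : ℕ | ∃ f : ℕ → Fin m × Fin n, f 0 = u ∧ f k = v ∧
        ∀ i < k, DArc m n (f i) (f (i + 1))} :=
    exists_walk m n hm hn _ u v rfl
  refine le_antisymm (Nat.sInf_le hmem) (le_csInf ⟨_, hmem⟩ ?_)
  rintro k ⟨f, h0, hk, hw⟩
  have := walk_le m n hm hn v k f hw
  rw [h0, hk, Dn_self v.2.isLt] at this
  omega

lemma gaussQ (k : ℕ) : ∑ i ∈ range k, (i : ℚ) = k * (k - 1) / 2 := by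
  induction k with
  | zero => simp
  | succ k ih => rw [sum_range_succ, ih]; push_cast; ring

lemma linSum (α β : ℚ) (k : ℕ) :
    ∑ i ∈ range k, (α + β * (i : ℚ)) = k * α + β * (k * (k - 1) / 2) := by
  rw [sum_add_distrib, sum_const, card_range, ← mul_sum, gaussQ, nsmul_eq_mul]

-- Region I double sum
lemma SA_I (m : ℕ) :
    ∑ a ∈ range m, ∑ c ∈ range m, (if a ≤ c then (c : ℚ) - a else (a : ℚ) + c + 2)
      = ((m:ℚ)-1)*m*(m+1)/6 + m*((m:ℚ)-1)^2/2 + m*((m:ℚ)-1) := by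
  induction m with
  | zero => simp
  | succ m ih =>
    simp only [sum_range_succ]
    rw [sum_add_distrib, ih]
    have e1 : ∑ a ∈ range m, (if a ≤ m then (m : ℚ) - a else (a : ℚ) + m + 2)
        = ∑ a ∈ range m, (((m:ℚ)) + (-1) * (a:ℚ)) := by
      refine sum_congr rfl fun a ha => ?_
      have := mem_range.1 ha
      split_ifs <;> first | (exfalso; omega) | (push_cast; ring)
    have e2 : ∑ c ∈ range m, (if m ≤ c then (c : ℚ) - m else (m : ℚ) + c + 2)
        = ∑ c ∈ range m, (((m:ℚ)+2) + 1 * (c:ℚ)) := by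
      refine sum_congr rfl fun c hc => ?_
      have := mem_range.1 hc
      split_ifs <;> first | (exfalso; omega) | (push_cast; ring)
    rw [e1, e2, linSum, linSum, if_pos (le_refl m)]
    push_cast; ring

-- Region II (b = n-1, d < n-1), K = n-1-d
lemma SA_II (K : ℚ) (m : ℕ) (hm : 1 ≤ m) :
    ∑ a ∈ range m, ∑ c ∈ range m,
        (if a = 0 then (if c = 0 then K + 2 else (c : ℚ) + K)
         else (K + if a ≤ c then (c : ℚ) - a else (a : ℚ) - c))
      = (m:ℚ)^2 * K + 2 + ((m:ℚ)-1)*m*((m:ℚ)+1)/3 := by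
  induction m, hm using Nat.le_induction with
  | base => simp [sum_range_one]; try ring
  | succ m hm ih =>
    simp only [sum_range_succ]
    rw [sum_add_distrib, ih]
    have e1 : ∑ a ∈ range m,
        (if a = 0 then (if m = 0 then K + 2 else (m : ℚ) + K)
         else (K + if a ≤ m then (m : ℚ) - a else (a : ℚ) - m))
        = ∑ a ∈ range m, ((K + (m:ℚ)) + (-1) * (a:ℚ)) := by
      refine sum_congr rfl fun a ha => ?_
      have := mem_range.1 ha
      split_ifs <;> first | (exfalso; omega) | (subst_vars; push_cast; ring)
    have e2 : ∑ c ∈ range m,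
        (if m = 0 then (if c = 0 then K + 2 else (c : ℚ) + K)
         else (K + if m ≤ c then (c : ℚ) - m else (m : ℚ) - c))
        = ∑ c ∈ range m, ((K + (m:ℚ)) + (-1) * (c:ℚ)) := by
      refine sum_congr rfl fun c hc => ?_
      have := mem_range.1 hc
      split_ifs <;> first | (exfalso; omega) | (subst_vars; push_cast; ring)
    have e3 : (if m = 0 then (if m = 0 then K + 2 else (m : ℚ) + K)
         else (K + if m ≤ m then (m : ℚ) - m else (m : ℚ) - m)) = K := by
      split_ifs <;> first | (exfalso; omega) | ring
    rw [e1, e2, e3]; simp only [linSum]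
    push_cast; ring

-- Region IIIa (b+1 < n, d < b), L = b-d, M = 2n-2-b-d
lemma SA_IIIa (L M : ℚ) (m : ℕ) (hm : 1 ≤ m) :
    ∑ a ∈ range m, ∑ c ∈ range m,
        (if c ≤ a then (if a = 0 then M + 2 else (a : ℚ) - c + L) else (a : ℚ) + c + M)
      = M + 2 + ((m:ℚ)-1)*m*(m+1)/6 + L*((m:ℚ)*(m+1)/2 - 1)
        + m*((m:ℚ)-1)^2/2 + M*(m*((m:ℚ)-1)/2) := by
  induction m, hm using Nat.le_induction with
  | base => simp [sum_range_one]; try ring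
  | succ m hm ih =>
    simp only [sum_range_succ]
    rw [sum_add_distrib, ih]
    have e1 : ∑ a ∈ range m,
        (if m ≤ a then (if a = 0 then M + 2 else (a : ℚ) - m + L) else (a : ℚ) + m + M)
        = ∑ a ∈ range m, (((m:ℚ) + M) + 1 * (a:ℚ)) := by
      refine sum_congr rfl fun a ha => ?_
      have := mem_range.1 ha
      split_ifs <;> first | (exfalso; omega) | (subst_vars; push_cast; ring)
    have e2 : ∑ c ∈ range m,
        (if c ≤ m then (if m = 0 then M + 2 else (m : ℚ) - c + L) else (m : ℚ) + c + M)
        = ∑ c ∈ range m, (((m:ℚ) + L) + (-1) * (c:ℚ)) := by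
      refine sum_congr rfl fun c hc => ?_
      have := mem_range.1 hc
      split_ifs <;> first | (exfalso; omega) | (subst_vars; push_cast; ring)
    have e3 : (if m ≤ m then (if m = 0 then M + 2 else (m : ℚ) - m + L) else (m : ℚ) + m + M)
        = L := by
      split_ifs <;> first | (exfalso; omega) | ring
    rw [e1, e2, e3]; simp only [linSum]
    push_cast; ring

-- Region IIIb (b+1 < n, d = b), M = 2n-2-b-d
lemma SA_IIIb (M : ℚ) (m : ℕ) :
    ∑ a ∈ range m, ∑ c ∈ range m,
        (if c ≤ a then (a : ℚ) - c else (a : ℚ) + c + M)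
      = ((m:ℚ)-1)*m*(m+1)/6 + m*((m:ℚ)-1)^2/2 + M*(m*((m:ℚ)-1)/2) := by
  induction m with
  | zero => simp
  | succ m ih =>
    simp only [sum_range_succ]
    rw [sum_add_distrib, ih]
    have e1 : ∑ a ∈ range m, (if m ≤ a then (a : ℚ) - m else (a : ℚ) + m + M)
        = ∑ a ∈ range m, (((m:ℚ) + M) + 1 * (a:ℚ)) := by
      refine sum_congr rfl fun a ha => ?_
      have := mem_range.1 ha
      split_ifs <;> first | (exfalso; omega) | (push_cast; ring)
    have e2 : ∑ c ∈ range m, (if c ≤ m then (m : ℚ) - c else (m : ℚ) + c + M)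
        = ∑ c ∈ range m, ((m:ℚ) + (-1) * (c:ℚ)) := by
      refine sum_congr rfl fun c hc => ?_
      have := mem_range.1 hc
      split_ifs <;> first | (exfalso; omega) | (push_cast; ring)
    rw [e1, e2, if_pos (le_refl m)]; simp only [linSum]
    push_cast; ring

-- Region IVa (b+1 < n, d = n-1), R = d-b
lemma SA_IVa (R : ℚ) (m : ℕ) :
    ∑ a ∈ range m, ∑ c ∈ range m, ((a : ℚ) + c + R)
      = (m:ℚ)^2*((m:ℚ)-1) + (m:ℚ)^2*R := by
  induction m with
  | zero => simp
  | succ m ih =>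
    simp only [sum_range_succ]
    rw [sum_add_distrib, ih]
    have e1 : ∑ a ∈ range m, ((a : ℚ) + m + R)
        = ∑ a ∈ range m, (((m:ℚ) + R) + 1 * (a:ℚ)) := by
      refine sum_congr rfl fun a _ => by ring
    have e2 : ∑ c ∈ range m, ((m:ℚ) + c + R)
        = ∑ c ∈ range m, (((m:ℚ) + R) + 1 * (c:ℚ)) := by
      refine sum_congr rfl fun c _ => by ring
    rw [e1, e2]; simp only [linSum]
    push_cast; ring

-- Region IVb (b+1 < n, b < d < n-1), R = d-b, M = 2n-2-b-d
lemma SA_IVb (R M : ℚ) (m : ℕ) (hm : 1 ≤ m) :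
    ∑ a ∈ range m, ∑ c ∈ range m,
        (if c = 0 then (a : ℚ) + R else (a : ℚ) + c + M)
      = (m:ℚ)^2*((m:ℚ)-1) + m*R + m*((m:ℚ)-1)*M := by
  induction m, hm using Nat.le_induction with
  | base => simp [sum_range_one]; try ring
  | succ m hm ih =>
    simp only [sum_range_succ]
    rw [sum_add_distrib, ih]
    have e1 : ∑ a ∈ range m, (if (m:ℕ) = 0 then (a : ℚ) + R else (a : ℚ) + m + M)
        = ∑ a ∈ range m, (((m:ℚ) + M) + 1 * (a:ℚ)) := by
      refine sum_congr rfl fun a ha => ?_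
      split_ifs <;> first | (exfalso; omega) | (push_cast; ring)
    have e2 : ∑ c ∈ range m, (if c = 0 then (m : ℚ) + R else (m : ℚ) + c + M)
        = ∑ c ∈ range m, (if c = 0 then ((m:ℚ) + R - ((m:ℚ) + M)) else 0)
            + ∑ c ∈ range m, (((m:ℚ) + M) + 1 * (c:ℚ)) := by
      rw [← sum_add_distrib]
      refine sum_congr rfl fun c hc => ?_
      split_ifs <;> first | (subst_vars; push_cast; ring) | (push_cast; ring)
    have e3 : ∑ c ∈ range m, (if c = 0 then ((m:ℚ) + R - ((m:ℚ) + M)) else 0)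
        = (m:ℚ) + R - ((m:ℚ) + M) := by
      rw [Finset.sum_ite_eq' (range m) 0 (fun _ => ((m:ℚ) + R - ((m:ℚ) + M)))]
      rw [if_pos (mem_range.2 (by omega))]
    have e4 : (if (m:ℕ) = 0 then (m : ℚ) + R else (m : ℚ) + m + M) = (m:ℚ) + m + M := by
      rw [if_neg (by omega)]
    rw [e1, e2, e3, e4]; simp only [linSum]
    push_cast; ring

def Hq (m n b d : ℕ) : ℚ :=
  if b + 1 = n then
    (if d + 1 = n then
      ((m:ℚ)-1)*m*(m+1)/6 + m*((m:ℚ)-1)^2/2 + m*((m:ℚ)-1)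
     else
      (m:ℚ)^2 * ((n:ℚ)-1-d) + 2 + ((m:ℚ)-1)*m*((m:ℚ)+1)/3)
  else if d < b then
    (2*(n:ℚ)-2-b-d) + 2 + ((m:ℚ)-1)*m*(m+1)/6 + ((b:ℚ)-d)*((m:ℚ)*(m+1)/2 - 1)
      + m*((m:ℚ)-1)^2/2 + (2*(n:ℚ)-2-b-d)*(m*((m:ℚ)-1)/2)
  else if d = b then
    ((m:ℚ)-1)*m*(m+1)/6 + m*((m:ℚ)-1)^2/2 + (2*(n:ℚ)-2-b-d)*(m*((m:ℚ)-1)/2)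
  else if d + 1 = n then
    (m:ℚ)^2*((m:ℚ)-1) + (m:ℚ)^2*((d:ℚ)-b)
  else
    (m:ℚ)^2*((m:ℚ)-1) + m*((d:ℚ)-b) + m*((m:ℚ)-1)*(2*(n:ℚ)-2-b-d)

lemma stageA (m n : ℕ) (hm : 1 ≤ m) (hn : 2 ≤ n) (b d : ℕ) (hb : b < n) (hd : d < n) :
    ∑ a ∈ range m, ∑ c ∈ range m, ((Dn n a b c d : ℕ) : ℚ) = Hq m n b d := by
  have cast1 : ∀ a c : ℕ, ((Dn n a b c d : ℕ) : ℚ) = ((Dz n a b c d : ℤ) : ℚ) :=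
    fun a c => by exact_mod_cast congrArg (fun z : ℤ => (z : ℚ)) (Dn_cast hb hd)
  by_cases h1 : b + 1 = n
  · by_cases h2 : d + 1 = n
    · rw [Hq, if_pos h1, if_pos h2, ← SA_I m]
      refine sum_congr rfl fun a _ => sum_congr rfl fun c _ => ?_
      rw [cast1]; simp only [Dz]
      split_ifs <;> first | (push_cast; ring1) | (subst_vars; push_cast; ring1) | (exfalso; omega)
    · rw [Hq, if_pos h1, if_neg h2, ← SA_II ((n:ℚ)-1-(d:ℚ)) m hm]
      refine sum_congr rfl fun a _ => sum_congr rfl fun c _ => ?_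
      rw [cast1]; simp only [Dz]
      split_ifs <;> first | (push_cast; ring1) | (subst_vars; push_cast; ring1) | (exfalso; omega)
  · by_cases h2 : d < b
    · rw [Hq, if_neg h1, if_pos h2,
        ← SA_IIIa ((b:ℚ)-(d:ℚ)) (2*(n:ℚ)-2-(b:ℚ)-(d:ℚ)) m hm]
      refine sum_congr rfl fun a _ => sum_congr rfl fun c _ => ?_
      rw [cast1]; simp only [Dz]
      split_ifs <;> first | (push_cast; ring1) | (subst_vars; push_cast; ring1) | (exfalso; omega)
    · by_cases h3 : d = b
      · rw [Hq, if_neg h1, if_neg h2, if_pos h3,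
          ← SA_IIIb (2*(n:ℚ)-2-(b:ℚ)-(d:ℚ)) m]
        refine sum_congr rfl fun a _ => sum_congr rfl fun c _ => ?_
        rw [cast1]; simp only [Dz]
        split_ifs <;> first | (push_cast; ring1) | (subst_vars; push_cast; ring1) | (exfalso; omega)
      · by_cases h4 : d + 1 = n
        · rw [Hq, if_neg h1, if_neg h2, if_neg h3, if_pos h4,
            ← SA_IVa ((d:ℚ)-(b:ℚ)) m]
          refine sum_congr rfl fun a _ => sum_congr rfl fun c _ => ?_
          rw [cast1]; simp only [Dz]
          split_ifs <;> first | (push_cast; ring1) | (subst_vars; push_cast; ring1) | (exfalso; omega)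
        · rw [Hq, if_neg h1, if_neg h2, if_neg h3, if_neg h4,
            ← SA_IVb ((d:ℚ)-(b:ℚ)) (2*(n:ℚ)-2-(b:ℚ)-(d:ℚ)) m hm]
          refine sum_congr rfl fun a _ => sum_congr rfl fun c _ => ?_
          rw [cast1]; simp only [Dz]
          split_ifs <;> first | (push_cast; ring1) | (subst_vars; push_cast; ring1) | (exfalso; omega)

def coreQ (m n b d : ℕ) : ℚ :=
  if d < b then
    (2*(n:ℚ)-2-b-d) + 2 + ((m:ℚ)-1)*m*(m+1)/6 + ((b:ℚ)-d)*((m:ℚ)*(m+1)/2 - 1)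
      + m*((m:ℚ)-1)^2/2 + (2*(n:ℚ)-2-b-d)*(m*((m:ℚ)-1)/2)
  else if d = b then
    ((m:ℚ)-1)*m*(m+1)/6 + m*((m:ℚ)-1)^2/2 + (2*(n:ℚ)-2-b-d)*(m*((m:ℚ)-1)/2)
  else
    (m:ℚ)^2*((m:ℚ)-1) + m*((d:ℚ)-b) + m*((m:ℚ)-1)*(2*(n:ℚ)-2-b-d)

lemma SB (m n N : ℕ) :
    ∑ b ∈ range N, ∑ d ∈ range N, coreQ m n b d
      = -(N:ℚ)/3 + (N:ℚ)^2 - 2*(N:ℚ)^3/3 - (n:ℚ)*N + (n:ℚ)*(N:ℚ)^2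
        - (m:ℚ)*N/3 + 2*(m:ℚ)*(N:ℚ)^2/3 + (m:ℚ)*(N:ℚ)^3
        + (m:ℚ)*n*N/2 - 3*(m:ℚ)*n*(N:ℚ)^2/2
        + (m:ℚ)^2*N/6 - 3*(m:ℚ)^2*(N:ℚ)^2/2 - 2*(m:ℚ)^2*(N:ℚ)^3/3
        - (m:ℚ)^2*n*N/2 + 3*(m:ℚ)^2*n*(N:ℚ)^2/2
        - (m:ℚ)^3*N/6 + 5*(m:ℚ)^3*(N:ℚ)^2/6 := by
  induction N with
  | zero => norm_num
  | succ N ih =>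
    simp only [sum_range_succ]
    rw [sum_add_distrib, ih]
    have e1 : ∑ d ∈ range N, coreQ m n N d
        = ∑ d ∈ range N,
            ((2*(n:ℚ)-2-N + 2 + ((m:ℚ)-1)*m*(m+1)/6 + (N:ℚ)*((m:ℚ)*(m+1)/2 - 1)
              + m*((m:ℚ)-1)^2/2 + (2*(n:ℚ)-2-N)*(m*((m:ℚ)-1)/2))
             + (-(m:ℚ)^2) * (d:ℚ)) := by
      refine sum_congr rfl fun d hd => ?_
      have := mem_range.1 hd
      simp only [coreQ]
      split_ifs <;> first | (push_cast; ring1) | (exfalso; omega)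
    have e2 : ∑ b ∈ range N, coreQ m n b N
        = ∑ b ∈ range N,
            (((m:ℚ)^2*((m:ℚ)-1) + m*(N:ℚ) + m*((m:ℚ)-1)*(2*(n:ℚ)-2-N))
             + (-(m:ℚ)^2) * (b:ℚ)) := by
      refine sum_congr rfl fun b hb => ?_
      have := mem_range.1 hb
      simp only [coreQ]
      split_ifs <;> first | (push_cast; ring1) | (exfalso; omega)
    have e3 : coreQ m n N N
        = ((m:ℚ)-1)*m*(m+1)/6 + m*((m:ℚ)-1)^2/2
          + (2*(n:ℚ)-2-N-N)*(m*((m:ℚ)-1)/2) := by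
      simp only [coreQ]
      split_ifs <;> first | (push_cast; ring1) | (exfalso; omega)
    rw [e1, e2, e3, linSum, linSum]
    push_cast; ring

lemma Hq_core (m n b d : ℕ) (h1 : ¬(b + 1 = n)) (h2 : ¬(d + 1 = n)) :
    Hq m n b d = coreQ m n b d := by
  simp only [Hq, coreQ]
  split_ifs <;> first | rfl | (exfalso; omega)

lemma Hq_row (m N b : ℕ) (hb : b < N) :
    Hq m (N+1) b N = ((m:ℚ)^2*((m:ℚ)-1) + (m:ℚ)^2*(N:ℚ)) + (-(m:ℚ)^2) * (b:ℚ) := by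
  simp only [Hq]
  split_ifs <;> first | (push_cast; ring1) | (exfalso; omega)

lemma Hq_col (m N d : ℕ) (hd : d < N) :
    Hq m (N+1) N d = ((m:ℚ)^2*(N:ℚ) + 2 + ((m:ℚ)-1)*m*((m:ℚ)+1)/3) + (-(m:ℚ)^2) * (d:ℚ) := by
  simp only [Hq]
  split_ifs <;> first | (push_cast; ring1) | (exfalso; omega)

lemma Hq_corner (m N : ℕ) :
    Hq m (N+1) N N = ((m:ℚ)-1)*m*(m+1)/6 + m*((m:ℚ)-1)^2/2 + m*((m:ℚ)-1) := by
  simp only [Hq]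
  split_ifs <;> first | rfl | (exfalso; omega)


/-- Theorem 3: the Wiener index of the orientation `D_{m,n}`, for `m, n ≥ 2`. -/
theorem wiener_D (m n : ℕ) (hm : 2 ≤ m) (hn : 2 ≤ n) :
    (12 : ℤ) * (wiener (DArc m n) : ℤ) =
      10 * (m : ℤ) ^ 3 * (n : ℤ) ^ 2 + 10 * (m : ℤ) ^ 2 * (n : ℤ) ^ 3
        - 6 * (m : ℤ) ^ 3 * (n : ℤ) - 24 * (m : ℤ) ^ 2 * (n : ℤ) ^ 2
        - 6 * (m : ℤ) * (n : ℤ) ^ 3 + 4 * (m : ℤ) ^ 3 + 14 * (m : ℤ) ^ 2 * (n : ℤ)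
        + 14 * (m : ℤ) * (n : ℤ) ^ 2 + 4 * (n : ℤ) ^ 3 - 12 * (m : ℤ) * (n : ℤ)
        - 4 * (m : ℤ) - 4 * (n : ℤ) := by
  obtain ⟨N, rfl⟩ : ∃ N, n = N + 1 := ⟨n - 1, by omega⟩
  have hN : 1 ≤ N := by omega
  have hm1 : 1 ≤ m := by omega
  -- Step 1: wiener as a quadruple range sum
  have hw1 : wiener (DArc m (N+1)) =
      ∑ b ∈ range (N+1), ∑ d ∈ range (N+1), ∑ a ∈ range m, ∑ c ∈ range m,
        Dn (N+1) a b c d := by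
    have hdd : wiener (DArc m (N+1))
        = ∑ u : Fin m × Fin (N+1), ∑ v : Fin m × Fin (N+1),
            Dn (N+1) (u.1 : ℕ) (u.2 : ℕ) (v.1 : ℕ) (v.2 : ℕ) := by
      unfold wiener
      exact sum_congr rfl fun u _ => sum_congr rfl fun v _ => ddist_eq m (N+1) hm hn u v
    rw [hdd]
    simp only [Fintype.sum_prod_type]
    have e4 : ∀ x y z : ℕ, (∑ d : Fin (N+1), Dn (N+1) x y z ↑d)
        = ∑ d ∈ range (N+1), Dn (N+1) x y z d :=
      fun x y z => Fin.sum_univ_eq_sum_range _ _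
    have e3 : ∀ x y : ℕ, (∑ c : Fin m, ∑ d : Fin (N+1), Dn (N+1) x y ↑c ↑d)
        = ∑ c ∈ range m, ∑ d ∈ range (N+1), Dn (N+1) x y c d := by
      intro x y
      rw [show (∑ c : Fin m, ∑ d : Fin (N+1), Dn (N+1) x y ↑c ↑d)
          = ∑ c : Fin m, ∑ d ∈ range (N+1), Dn (N+1) x y ↑c d from
        Finset.sum_congr rfl fun c _ => e4 x y ↑c]
      exact Fin.sum_univ_eq_sum_range (fun c => ∑ d ∈ range (N+1), Dn (N+1) x y c d) m
    have e2 : ∀ x : ℕ, (∑ b : Fin (N+1), ∑ c : Fin m, ∑ d : Fin (N+1), Dn (N+1) x ↑b ↑c ↑d)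
        = ∑ b ∈ range (N+1), ∑ c ∈ range m, ∑ d ∈ range (N+1), Dn (N+1) x b c d := by
      intro x
      rw [show (∑ b : Fin (N+1), ∑ c : Fin m, ∑ d : Fin (N+1), Dn (N+1) x ↑b ↑c ↑d)
          = ∑ b : Fin (N+1), ∑ c ∈ range m, ∑ d ∈ range (N+1), Dn (N+1) x ↑b c d from
        Finset.sum_congr rfl fun b _ => e3 x ↑b]
      exact Fin.sum_univ_eq_sum_range
        (fun b => ∑ c ∈ range m, ∑ d ∈ range (N+1), Dn (N+1) x b c d) (N+1)
    have e1 : (∑ a : Fin m, ∑ b : Fin (N+1), ∑ c : Fin m, ∑ d : Fin (N+1),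
          Dn (N+1) ↑a ↑b ↑c ↑d)
        = ∑ a ∈ range m, ∑ b ∈ range (N+1), ∑ c ∈ range m, ∑ d ∈ range (N+1),
            Dn (N+1) a b c d := by
      rw [show (∑ a : Fin m, ∑ b : Fin (N+1), ∑ c : Fin m, ∑ d : Fin (N+1),
            Dn (N+1) ↑a ↑b ↑c ↑d)
          = ∑ a : Fin m, ∑ b ∈ range (N+1), ∑ c ∈ range m, ∑ d ∈ range (N+1),
              Dn (N+1) ↑a b c d from
        Finset.sum_congr rfl fun a _ => e2 ↑a]
      exact Fin.sum_univ_eq_sum_range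
        (fun a => ∑ b ∈ range (N+1), ∑ c ∈ range m, ∑ d ∈ range (N+1),
          Dn (N+1) a b c d) m
    rw [e1]
    have s1 : ∀ b : ℕ, (∑ a ∈ range m, ∑ c ∈ range m, ∑ d ∈ range (N+1),
          Dn (N+1) a b c d)
        = ∑ d ∈ range (N+1), ∑ a ∈ range m, ∑ c ∈ range m, Dn (N+1) a b c d := by
      intro b
      have i1 : (∑ a ∈ range m, ∑ c ∈ range m, ∑ d ∈ range (N+1), Dn (N+1) a b c d)
          = ∑ a ∈ range m, ∑ d ∈ range (N+1), ∑ c ∈ range m, Dn (N+1) a b c d :=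
        sum_congr rfl fun a _ => Finset.sum_comm
      have i2 : (∑ a ∈ range m, ∑ d ∈ range (N+1), ∑ c ∈ range m, Dn (N+1) a b c d)
          = ∑ d ∈ range (N+1), ∑ a ∈ range m, ∑ c ∈ range m, Dn (N+1) a b c d :=
        Finset.sum_comm
      rw [i1, i2]
    have s2 : (∑ a ∈ range m, ∑ b ∈ range (N+1), ∑ c ∈ range m, ∑ d ∈ range (N+1),
          Dn (N+1) a b c d)
        = ∑ b ∈ range (N+1), ∑ a ∈ range m, ∑ c ∈ range m, ∑ d ∈ range (N+1),
            Dn (N+1) a b c d :=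
      Finset.sum_comm
    rw [s2]
    exact sum_congr rfl fun b _ => s1 b
  -- Step 2: to ℚ and apply stageA
  have hw2 : (wiener (DArc m (N+1)) : ℚ) =
      ∑ b ∈ range (N+1), ∑ d ∈ range (N+1), Hq m (N+1) b d := by
    rw [hw1]
    push_cast
    exact sum_congr rfl fun b hb => sum_congr rfl fun d hd =>
      stageA m (N+1) hm1 hn b d (mem_range.1 hb) (mem_range.1 hd)
  -- Step 3: closed form for the Hq double sum
  have hw3 : ∑ b ∈ range (N+1), ∑ d ∈ range (N+1), Hq m (N+1) b d
      = (-(N:ℚ)/3 + (N:ℚ)^2 - 2*(N:ℚ)^3/3 - ((N:ℚ)+1)*N + ((N:ℚ)+1)*(N:ℚ)^2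
        - (m:ℚ)*N/3 + 2*(m:ℚ)*(N:ℚ)^2/3 + (m:ℚ)*(N:ℚ)^3
        + (m:ℚ)*((N:ℚ)+1)*N/2 - 3*(m:ℚ)*((N:ℚ)+1)*(N:ℚ)^2/2
        + (m:ℚ)^2*N/6 - 3*(m:ℚ)^2*(N:ℚ)^2/2 - 2*(m:ℚ)^2*(N:ℚ)^3/3
        - (m:ℚ)^2*((N:ℚ)+1)*N/2 + 3*(m:ℚ)^2*((N:ℚ)+1)*(N:ℚ)^2/2
        - (m:ℚ)^3*N/6 + 5*(m:ℚ)^3*(N:ℚ)^2/6)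
        + ((N:ℚ) * ((m:ℚ)^2*((m:ℚ)-1) + (m:ℚ)^2*(N:ℚ))
            + (-(m:ℚ)^2) * ((N:ℚ) * ((N:ℚ) - 1) / 2))
        + ((N:ℚ) * ((m:ℚ)^2*(N:ℚ) + 2 + ((m:ℚ)-1)*m*((m:ℚ)+1)/3)
            + (-(m:ℚ)^2) * ((N:ℚ) * ((N:ℚ) - 1) / 2))
        + (((m:ℚ)-1)*m*(m+1)/6 + m*((m:ℚ)-1)^2/2 + m*((m:ℚ)-1)) := by
    simp only [sum_range_succ]
    rw [sum_add_distrib]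
    have c1 : ∑ b ∈ range N, ∑ d ∈ range N, Hq m (N+1) b d
        = ∑ b ∈ range N, ∑ d ∈ range N, coreQ m (N+1) b d :=
      sum_congr rfl fun b hb => sum_congr rfl fun d hd =>
        Hq_core m (N+1) b d (by have := mem_range.1 hb; omega)
          (by have := mem_range.1 hd; omega)
    have c2 : ∑ b ∈ range N, Hq m (N+1) b N
        = ∑ b ∈ range N, (((m:ℚ)^2*((m:ℚ)-1) + (m:ℚ)^2*(N:ℚ)) + (-(m:ℚ)^2) * (b:ℚ)) :=
      sum_congr rfl fun b hb => Hq_row m N b (mem_range.1 hb)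
    have c3 : ∑ d ∈ range N, Hq m (N+1) N d
        = ∑ d ∈ range N, (((m:ℚ)^2*(N:ℚ) + 2 + ((m:ℚ)-1)*m*((m:ℚ)+1)/3)
            + (-(m:ℚ)^2) * (d:ℚ)) :=
      sum_congr rfl fun d hd => Hq_col m N d (mem_range.1 hd)
    rw [c1, SB, c2, c3, linSum, linSum, Hq_corner]; push_cast; ring
  -- Step 4: conclude over ℤ via ℚ
  have hQ : (wiener (DArc m (N+1)) : ℚ) * 12 =
      10 * (m:ℚ)^3 * ((N:ℚ)+1)^2 + 10 * (m:ℚ)^2 * ((N:ℚ)+1)^3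
        - 6 * (m:ℚ)^3 * ((N:ℚ)+1) - 24 * (m:ℚ)^2 * ((N:ℚ)+1)^2
        - 6 * (m:ℚ) * ((N:ℚ)+1)^3 + 4 * (m:ℚ)^3 + 14 * (m:ℚ)^2 * ((N:ℚ)+1)
        + 14 * (m:ℚ) * ((N:ℚ)+1)^2 + 4 * ((N:ℚ)+1)^3 - 12 * (m:ℚ) * ((N:ℚ)+1)
        - 4 * (m:ℚ) - 4 * ((N:ℚ)+1) := by
    rw [hw2, hw3]; ring
  have hZ : (((12 : ℤ) * (wiener (DArc m (N+1)) : ℤ) : ℤ) : ℚ) =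
      ((10 * (m : ℤ) ^ 3 * ((N:ℤ)+1) ^ 2 + 10 * (m : ℤ) ^ 2 * ((N:ℤ)+1) ^ 3
        - 6 * (m : ℤ) ^ 3 * ((N:ℤ)+1) - 24 * (m : ℤ) ^ 2 * ((N:ℤ)+1) ^ 2
        - 6 * (m : ℤ) * ((N:ℤ)+1) ^ 3 + 4 * (m : ℤ) ^ 3 + 14 * (m : ℤ) ^ 2 * ((N:ℤ)+1)
        + 14 * (m : ℤ) * ((N:ℤ)+1) ^ 2 + 4 * ((N:ℤ)+1) ^ 3 - 12 * (m : ℤ) * ((N:ℤ)+1)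
        - 4 * (m : ℤ) - 4 * ((N:ℤ)+1) : ℤ) : ℚ) := by
    push_cast
    linear_combination hQ
  have := (Int.cast_injective (α := ℚ)) hZ
  push_cast
  push_cast at this
  linarith [this]
end

section
/- For all integers m, n ≥ 2, W(D_{m,n}) = W(D_{n,m}); that is, the Wiener index of the orientation D_{m,n} of the m×n grid equals that of the orientation D_{n,m} of the n×m grid. -/
/-- If `φ` is an anti-isomorphism of digraphs, distances are reversed. -/
lemma ddist_anti {V W : Type*} (φ : V ≃ W) (A : V → V → Prop) (B : W → W → Prop)
    (h : ∀ p q, A p q ↔ B (φ q) (φ p)) (u v : V) :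
    ddist A u v = ddist B (φ v) (φ u) := by
  unfold ddist
  congr 1
  ext k
  constructor
  · rintro ⟨f, h0, hk, hstep⟩
    refine ⟨fun i => φ (f (k - i)), by simp [hk], by simp [h0], fun i hi => ?_⟩
    have h1 := hstep (k - (i + 1)) (by omega)
    rw [h] at h1
    have e : k - (i + 1) + 1 = k - i := by omega
    rw [e] at h1
    exact h1
  · rintro ⟨g, h0, hk, hstep⟩
    refine ⟨fun i => φ.symm (g (k - i)), by simp [hk], by simp [h0], fun i hi => ?_⟩
    rw [h]
    simp only [Equiv.apply_symm_apply]
    have h1 := hstep (k - (i + 1)) (by omega)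
    have e : k - (i + 1) + 1 = k - i := by omega
    rw [e] at h1
    exact h1

/-- Anti-isomorphic digraphs have equal Wiener indices. -/
lemma wiener_anti {V W : Type*} [Fintype V] [Fintype W] (φ : V ≃ W)
    (A : V → V → Prop) (B : W → W → Prop)
    (h : ∀ p q, A p q ↔ B (φ q) (φ p)) :
    wiener A = wiener B := by
  unfold wiener
  calc ∑ u : V, ∑ v : V, ddist A u v
      = ∑ u : V, ∑ v : V, ddist B (φ v) (φ u) := by
        simp only [fun u v => ddist_anti φ A B h u v]
    _ = ∑ u : V, ∑ y : W, ddist B y (φ u) := by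
        refine Finset.sum_congr rfl fun u _ => ?_
        exact (Equiv.sum_comp φ (fun y => ddist B y (φ u)))
    _ = ∑ x : W, ∑ y : W, ddist B y x :=
        Equiv.sum_comp φ (fun x => ∑ y : W, ddist B y x)
    _ = ∑ y : W, ∑ x : W, ddist B y x := Finset.sum_comm

/-- Reflection across the anti-diagonal. -/
def adiag (m n : ℕ) : Fin m × Fin n ≃ Fin n × Fin m where
  toFun p := (p.2.rev, p.1.rev)
  invFun p := (p.2.rev, p.1.rev)
  left_inv p := by simp
  right_inv p := by simp

/-- For all `m, n ≥ 2`, the orientations `D_{m,n}` and `D_{n,m}` have the same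
Wiener index. -/
theorem wiener_D_symm (m n : ℕ) (hm : 2 ≤ m) (hn : 2 ≤ n) :
    wiener (DArc m n) = wiener (DArc n m) := by
  refine wiener_anti (adiag m n) _ _ fun p q => ?_
  obtain ⟨a, b⟩ := p
  obtain ⟨c, d⟩ := q
  have ha := a.isLt
  have hb := b.isLt
  have hc := c.isLt
  have hd := d.isLt
  simp only [DArc, adiag, Equiv.coe_fn_mk, Fin.ext_iff, Fin.val_rev]
  omega
end

section
/- If m and n are even integers with 4 ≤ m < n, then 2m²n² − 4mn(m + n) − 4m² − 4n² + mn + 30(m + n) − 56 > 0. -/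
/-- If `m` and `n` are even integers with `4 ≤ m < n`, then
`2m²n² − 4mn(m + n) − 4m² − 4n² + mn + 30(m + n) − 56 > 0`. -/
theorem bracket_pos (m n : ℤ) (hme : Even m) (hne : Even n) (hm : 4 ≤ m) (hmn : m < n) :
    0 < 2 * m ^ 2 * n ^ 2 - 4 * m * n * (m + n) - 4 * m ^ 2 - 4 * n ^ 2 + m * n
        + 30 * (m + n) - 56 := by
  have hn : m + 2 ≤ n := by
    obtain ⟨a, ha⟩ := hme
    obtain ⟨b, hb⟩ := hne
    omega
  nlinarith [mul_pos (by linarith : (0:ℤ) < m - 3) (by linarith : (0:ℤ) < n - 3),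
    mul_pos (by linarith : (0:ℤ) < m - 2) (by linarith : (0:ℤ) < n - m),
    sq_nonneg (m*n - 2*m - 2*n), sq_nonneg (m - 4), sq_nonneg (n - 6),
    mul_pos (by linarith : (0:ℤ) < m) (by linarith : (0:ℤ) < n)]
end

section
/- Let G be a simple graph on n vertices that has a Hamiltonian path H. Orient all edges of H in one direction along the path and orient all remaining edges of G in the opposite direction (i.e., for an edge uv not in H, direct it from the later endpoint to the earlier endpoint with respect to the path order); let D_H be the resulting digraph. Then W(D_H) ≥ C(n+1, 3), and consequently the maximum Wiener index W_max(G) over all orientations of G satisfies W_max(G) ≥ C(n+1, 3). -/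
lemma aux_sum_range_id (n : ℕ) : ∑ i ∈ Finset.range n, i = n.choose 2 := by
  induction n with
  | zero => simp
  | succ n ih =>
    have hc : (n + 1).choose 2 = n.choose 1 + n.choose 2 := rfl
    rw [Finset.sum_range_succ, ih, hc, Nat.choose_one_right]
    omega

lemma aux_T (n : ℕ) :
    ∑ i ∈ Finset.range n, ∑ j ∈ Finset.range n, (j - i) = (n + 1).choose 3 := by
  induction n with
  | zero => rfl
  | succ n ih =>
    have h1 : ∀ i ∈ Finset.range (n + 1),
        ∑ j ∈ Finset.range (n + 1), (j - i) = ∑ j ∈ Finset.range n, (j - i) + (n - i) :=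
      fun i _ => Finset.sum_range_succ _ n
    rw [Finset.sum_congr rfl h1, Finset.sum_add_distrib,
      Finset.sum_range_succ (fun i => ∑ j ∈ Finset.range n, (j - i)) n]
    have h2 : ∑ j ∈ Finset.range n, (j - n) = 0 :=
      Finset.sum_eq_zero (fun j hj => by simp at hj; omega)
    have h3 : ∑ i ∈ Finset.range (n + 1), (n - i) = (n + 1).choose 2 := by
      have := Finset.sum_range_reflect (fun j => j) (n + 1)
      simp only [Nat.add_sub_cancel] at this
      rw [this]
      exact aux_sum_range_id (n + 1)
    have hc : (n + 2).choose 3 = (n + 1).choose 2 + (n + 1).choose 3 := rfl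
    rw [h2, h3, ih, hc]
    omega

/-- Let `G` be a simple graph on `n` vertices having a Hamiltonian path (given by an
enumeration `e : Fin n ≃ V` of the vertices with consecutive vertices adjacent).
Orient each edge of the path forwards and every other edge of `G` backwards
(from the later endpoint to the earlier endpoint in the path order); the resulting
digraph `D_H` satisfies `W(D_H) ≥ C(n+1, 3)`, and consequently some orientation of `G`
(a choice, for each edge, of exactly one of the two directions) has Wiener index
at least `C(n+1, 3)`. -/
theorem wiener_hamPath_orientation {V : Type*} [Fintype V] (G : SimpleGraph V)
    (n : ℕ) (hn : Fintype.card V = n) (e : Fin n ≃ V)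
    (hham : ∀ i : Fin n, ∀ h : (i : ℕ) + 1 < n, G.Adj (e i) (e ⟨(i : ℕ) + 1, h⟩)) :
    (n + 1).choose 3 ≤
        wiener (fun u v : V => G.Adj u v ∧
          (((e.symm v : ℕ) = (e.symm u : ℕ) + 1) ∨ ((e.symm v : ℕ) + 1 < (e.symm u : ℕ)))) ∧
      ∃ A : V → V → Prop, (∀ u v, A u v → G.Adj u v) ∧
        (∀ u v, G.Adj u v → (A u v ↔ ¬ A v u)) ∧
        (n + 1).choose 3 ≤ wiener A := by
  set A : V → V → Prop := fun u v : V => G.Adj u v ∧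
      (((e.symm v : ℕ) = (e.symm u : ℕ) + 1) ∨ ((e.symm v : ℕ) + 1 < (e.symm u : ℕ))) with hA
  have key : ∀ i j : Fin n, (j : ℕ) - (i : ℕ) ≤ ddist A (e i) (e j) := by
    intro i j
    rcases le_or_gt (j : ℕ) (i : ℕ) with h | h
    · simp [Nat.sub_eq_zero_of_le h]
    · unfold ddist
      apply le_csInf
      · refine ⟨(j : ℕ) - (i : ℕ),
          fun t => e ⟨min ((i : ℕ) + t) (j : ℕ), by have := j.isLt; omega⟩, ?_, ?_, ?_⟩
        · exact congrArg e (Fin.ext (by simp; omega))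
        · exact congrArg e (Fin.ext (by simp; omega))
        · intro t ht
          have hm1 : min ((i : ℕ) + t) (j : ℕ) = (i : ℕ) + t := by omega
          have hm2 : min ((i : ℕ) + (t + 1)) (j : ℕ) = (i : ℕ) + t + 1 := by omega
          have hlt : (i : ℕ) + t + 1 < n := by have := j.isLt; omega
          simp only [hm1, hm2]
          refine ⟨?_, Or.inl ?_⟩
          · exact hham ⟨(i : ℕ) + t, by omega⟩ hlt
          · simp
      · rintro k ⟨f, h0, hk, harc⟩
        have mono : ∀ t, t ≤ k → (e.symm (f t) : ℕ) ≤ (i : ℕ) + t := by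
          intro t
          induction t with
          | zero => intro _; simp [h0]
          | succ t ih =>
            intro hle
            have ih' := ih (by omega)
            obtain ⟨-, hcase⟩ := harc t (by omega)
            rcases hcase with hc | hc <;> omega
        have := mono k le_rfl
        rw [hk] at this
        simp only [Equiv.symm_apply_apply] at this
        omega
  have hw : (n + 1).choose 3 ≤ wiener A := by
    have hsum : (∑ i : Fin n, ∑ j : Fin n, ((j : ℕ) - (i : ℕ))) = (n + 1).choose 3 := by
      rw [Fin.sum_univ_eq_sum_range (fun m => ∑ j : Fin n, ((j : ℕ) - m)) n]
      rw [Finset.sum_congr rfl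
        (fun m _ => Fin.sum_univ_eq_sum_range (fun l => l - m) n)]
      exact aux_T n
    calc (n + 1).choose 3 = ∑ i : Fin n, ∑ j : Fin n, ((j : ℕ) - (i : ℕ)) := hsum.symm
      _ ≤ ∑ i : Fin n, ∑ j : Fin n, ddist A (e i) (e j) :=
          Finset.sum_le_sum (fun i _ => Finset.sum_le_sum (fun j _ => key i j))
      _ = wiener A := by
          rw [wiener]
          rw [← Equiv.sum_comp e (fun u => ∑ v : V, ddist A u v)]
          exact Finset.sum_congr rfl
            (fun i _ => (Equiv.sum_comp e (fun v => ddist A (e i) v)))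
  refine ⟨hw, A, fun u v h => h.1, ?_, hw⟩
  intro u v huv
  have hne : (e.symm u : ℕ) ≠ (e.symm v : ℕ) := by
    intro hcon
    exact huv.ne (by
      have : e.symm u = e.symm v := Fin.ext hcon
      simpa using congrArg e this)
  constructor
  · rintro ⟨-, h1⟩ ⟨-, h2⟩
    omega
  · intro h
    refine ⟨huv, ?_⟩
    by_contra h2
    push_neg at h2
    exact h ⟨huv.symm, by omega⟩
end
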